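/- Every nonnegative integer n can be written as T_x + T_y + 2T_z for nonnegative integers x, y, z. -/

import Mathlib

/-- The `n`-th triangular number. -/
def T (n : ℕ) : ℕ := n * (n + 1) / 2

/-!
Since `(2k + 1)² = 8 T k + 1`, the claim is that `8n + 4 = a² + b² + 2c²` with `a, b, c` odd. If
`4n + 2 = u² + v² + w²`, then modulo 4 two of `u, v, w`, say `u` and `v`, are odd and `w` is even,
and `8n + 4 = (u + w)² + (u - w)² + 2v²`. So it suffices that `2m` is a sum of three squares for
every odd `m`.

Dirichlet's theorem gives a prime `p ≡ 3 (mod 8)` with `p ≡ -1 (mod m)`; by reciprocity `-2m` is a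
square mod `p`, and this produces a positive definite integral symmetric `3 × 3` matrix of
determinant 1 with corner entry `2m`. Every such matrix is `Lᵀ L`: after a unimodular change of
basis its corner entry is the minimum `μ` of the form; completing the square leaves a binary form of
determinant `μ` whose nonzero values are at least `3μ² / 4`, while Gauss reduction gives it a value
at most `√(4μ / 3)`. Hence `27 μ³ ≤ 64`, so `μ = 1`, and the binary case of determinant 1 finishes.
-/

open Matrix

lemma exists_two_mul_abs_add_mul_le (B : ℤ) {m : ℤ} (hm : 0 < m) : ∃ k, 2 * |B + k * m| ≤ m := by
  have h := Int.mul_ediv_add_emod (2 * B + m) (2 * m)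
  have h0 := Int.emod_nonneg (2 * B + m) (by omega : 2 * m ≠ 0)
  have h1 := Int.emod_lt_of_pos (2 * B + m) (by omega : 0 < 2 * m)
  refine ⟨-((2 * B + m) / (2 * m)), ?_⟩
  rcases abs_cases (B + -((2 * B + m) / (2 * m)) * m) with ⟨habs, _⟩ | ⟨habs, _⟩ <;>
    rw [habs] <;> linarith

lemma Int.exists_eq_mul_isCoprime (x y : ℤ) :
    ∃ g x₁ y₁ : ℤ, x = g * x₁ ∧ y = g * y₁ ∧ IsCoprime x₁ y₁ := by
  rcases Nat.eq_zero_or_pos (Int.gcd x y) with h | h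
  · obtain ⟨rfl, rfl⟩ := Int.gcd_eq_zero_iff.1 h
    exact ⟨0, 1, 0, by simp, by simp, isCoprime_one_left⟩
  · obtain ⟨g, x₁, y₁, -, hcop, rfl, rfl⟩ := Int.exists_gcd_one' h
    exact ⟨g, x₁, y₁, mul_comm _ _, mul_comm _ _, Int.isCoprime_iff_gcd_eq_one.2 hcop⟩

namespace Matrix

variable {n : Type*} [Fintype n]

section CommRing
variable {R : Type*} [CommRing R]

lemma transpose_mul_mul_dotProduct_mulVec (G P : Matrix n n R) (v : n → R) :
    v ⬝ᵥ (Pᵀ * G * P) *ᵥ v = (P *ᵥ v) ⬝ᵥ G *ᵥ (P *ᵥ v) := by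
  rw [← mulVec_mulVec, ← mulVec_mulVec, dotProduct_mulVec, vecMul_transpose]

lemma mulVec_injective_of_det_eq_one [DecidableEq n] {P : Matrix n n R} (hP : P.det = 1) :
    Function.Injective P.mulVec :=
  mulVec_injective_of_isUnit ((isUnit_iff_isUnit_det P).2 (hP ▸ isUnit_one))

lemma transpose_mul_mul_apply_self [DecidableEq n] (G P : Matrix n n R) (i : n) :
    (Pᵀ * G * P) i i = P.col i ⬝ᵥ G *ᵥ P.col i := by
  simpa [mulVec_single_one] using transpose_mul_mul_dotProduct_mulVec G P (Pi.single i 1)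

lemma col_ne_zero_of_det_eq_one [DecidableEq n] [Nontrivial R] {P : Matrix n n R}
    (hP : P.det = 1) (i : n) : P.col i ≠ 0 := by
  intro h
  have := mulVec_injective_of_det_eq_one hP
    (((mulVec_single_one P i).trans h).trans (mulVec_zero P).symm)
  simpa using congrFun this i

lemma det_transpose_mul_mul_of_det_eq_one [DecidableEq n] (G : Matrix n n R) {P : Matrix n n R}
    (hP : P.det = 1) : (Pᵀ * G * P).det = G.det := by
  simp [det_mul, det_transpose, hP]

lemma eq_transpose_mul_self_of_transpose_mul_mul [DecidableEq n] {G P L : Matrix n n R}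
    (hP : P.det = 1) (h : Pᵀ * G * P = Lᵀ * L) : G = (L * adjugate P)ᵀ * (L * adjugate P) := by
  have hPadj : P * adjugate P = 1 := by simp [mul_adjugate, hP]
  calc G = (P * adjugate P)ᵀ * G * (P * adjugate P) := by simp [hPadj]
    _ = (adjugate P)ᵀ * (Pᵀ * G * P) * adjugate P := by
        simp only [transpose_mul, Matrix.mul_assoc]
    _ = (L * adjugate P)ᵀ * (L * adjugate P) := by
        rw [h]; simp only [transpose_mul, Matrix.mul_assoc]

end CommRing

lemma PosDef.transpose_mul_mul_of_det_eq_one [DecidableEq n] {G P : Matrix n n ℤ} (hG : G.PosDef)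
    (hP : P.det = 1) : (Pᵀ * G * P).PosDef := by
  simpa [conjTranspose_eq_transpose_of_trivial] using
    hG.conjTranspose_mul_mul_same (mulVec_injective_of_det_eq_one hP)

lemma PosDef.dotProduct_mulVec_pos_int {G : Matrix n n ℤ} (hG : G.PosDef) {v : n → ℤ}
    (hv : v ≠ 0) : 0 < v ⬝ᵥ G *ᵥ v := by
  simpa using hG.dotProduct_mulVec_pos hv

lemma PosDef.exists_min_dotProduct_mulVec [DecidableEq n] [Nonempty n] {G : Matrix n n ℤ}
    (hG : G.PosDef) : ∃ v ≠ 0, ∀ w ≠ 0, v ⬝ᵥ G *ᵥ v ≤ w ⬝ᵥ G *ᵥ w := by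
  obtain ⟨i⟩ := ‹Nonempty n›
  obtain ⟨_, ⟨v, hv, rfl⟩, hmin⟩ := Int.exists_least_of_bdd
    (P := fun m => ∃ v ≠ 0, v ⬝ᵥ G *ᵥ v = m)
    ⟨0, by rintro _ ⟨v, hv, rfl⟩; exact (hG.dotProduct_mulVec_pos_int hv).le⟩
    ⟨_, Pi.single i 1, by simp, rfl⟩
  exact ⟨v, hv, fun w hw => hmin _ ⟨w, hw, rfl⟩⟩

lemma PosDef.exists_dotProduct_eq_one_of_min {G : Matrix n n ℤ} (hG : G.PosDef) {v : n → ℤ}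
    (hv : v ≠ 0) (hmin : ∀ w ≠ 0, v ⬝ᵥ G *ᵥ v ≤ w ⬝ᵥ G *ᵥ w) : ∃ c, c ⬝ᵥ v = 1 := by
  set I := Ideal.span (Set.range v)
  set g := Submodule.IsPrincipal.generator I
  have hdvd : ∀ i, g ∣ v i := fun i => (Submodule.IsPrincipal.mem_iff_generator_dvd I).1
    (Ideal.subset_span ⟨i, rfl⟩)
  choose w hw using hdvd
  have hvw : v = g • w := funext hw
  have hw0 : w ≠ 0 := by rintro rfl; simp [hvw] at hv
  have hscale : v ⬝ᵥ G *ᵥ v = g ^ 2 * (w ⬝ᵥ G *ᵥ w) := by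
    rw [hvw, mulVec_smul, dotProduct_smul, smul_dotProduct]; simp [sq, mul_assoc]
  have hpos := hG.dotProduct_mulVec_pos_int hw0
  have hg : IsUnit g := by
    rw [Int.isUnit_iff_abs_eq]
    have : g ^ 2 ≤ 1 := by nlinarith [hmin w hw0]
    have : g ≠ 0 := by intro h0; simp [hvw, h0] at hv
    nlinarith [abs_pos.2 this, sq_abs g]
  have hI : (1 : ℤ) ∈ I := (Submodule.IsPrincipal.mem_iff_generator_dvd I).2 hg.dvd
  obtain ⟨c, hc⟩ := (Submodule.mem_span_range_iff_exists_fun ℤ).1 hI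
  exact ⟨c, by simpa [dotProduct] using hc⟩

lemma transpose_mul_mul_apply_self_le_of_min [DecidableEq n] {G P : Matrix n n ℤ} {v : n → ℤ}
    {i : n} (hmin : ∀ w ≠ 0, v ⬝ᵥ G *ᵥ v ≤ w ⬝ᵥ G *ᵥ w) (hP : P.det = 1) (hcol : P.col i = v) :
    ∀ w ≠ 0, (Pᵀ * G * P) i i ≤ w ⬝ᵥ (Pᵀ * G * P) *ᵥ w := by
  intro w hw
  rw [transpose_mul_mul_apply_self, hcol, transpose_mul_mul_dotProduct_mulVec]
  exact hmin _ fun h => hw (mulVec_injective_of_det_eq_one hP (h.trans (mulVec_zero P).symm))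

lemma exists_det_eq_one_col_zero_fin_two {v c : Fin 2 → ℤ} (hc : c ⬝ᵥ v = 1) :
    ∃ P : Matrix (Fin 2) (Fin 2) ℤ, P.det = 1 ∧ P.col 0 = v := by
  refine ⟨!![v 0, -c 1; v 1, c 0], ?_, ?_⟩
  · simp [det_fin_two, dotProduct, Fin.sum_univ_two] at hc ⊢; linarith
  · ext i; fin_cases i <;> rfl

lemma PosDef.exists_det_eq_one_min_fin_two {G : Matrix (Fin 2) (Fin 2) ℤ} (hG : G.PosDef) :
    ∃ P : Matrix (Fin 2) (Fin 2) ℤ, P.det = 1 ∧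
      ∀ w ≠ 0, (Pᵀ * G * P) 0 0 ≤ w ⬝ᵥ (Pᵀ * G * P) *ᵥ w := by
  obtain ⟨v, hv, hmin⟩ := hG.exists_min_dotProduct_mulVec
  obtain ⟨c, hc⟩ := hG.exists_dotProduct_eq_one_of_min hv hmin
  obtain ⟨P, hP, hcol⟩ := exists_det_eq_one_col_zero_fin_two hc
  exact ⟨P, hP, transpose_mul_mul_apply_self_le_of_min hmin hP hcol⟩

lemma PosDef.exists_reduced_of_min_fin_two {G : Matrix (Fin 2) (Fin 2) ℤ} (hG : G.PosDef)
    (hmin : ∀ w ≠ 0, G 0 0 ≤ w ⬝ᵥ G *ᵥ w) :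
    ∃ S : Matrix (Fin 2) (Fin 2) ℤ, S.det = 1 ∧
      2 * |(Sᵀ * G * S) 0 1| ≤ (Sᵀ * G * S) 0 0 ∧ (Sᵀ * G * S) 0 0 ≤ (Sᵀ * G * S) 1 1 := by
  have hsymm : G 1 0 = G 0 1 := by simpa using hG.1.apply 0 1
  obtain ⟨k, hk⟩ := exists_two_mul_abs_add_mul_le (G 0 1) (hG.diag_pos (i := 0))
  refine ⟨!![1, k; 0, 1], by simp [det_fin_two], ?_⟩
  have h11 := hmin ![k, 1] (by simp)
  simp [Matrix.mul_apply, Fin.sum_univ_two, dotProduct, mulVec, hsymm] at h11 ⊢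
  refine ⟨?_, by linarith⟩
  rwa [show G 0 0 * k + G 0 1 = G 0 1 + k * G 0 0 by ring]

lemma PosDef.exists_reduced_fin_two {G : Matrix (Fin 2) (Fin 2) ℤ} (hG : G.PosDef) :
    ∃ P : Matrix (Fin 2) (Fin 2) ℤ, P.det = 1 ∧
      2 * |(Pᵀ * G * P) 0 1| ≤ (Pᵀ * G * P) 0 0 ∧ (Pᵀ * G * P) 0 0 ≤ (Pᵀ * G * P) 1 1 := by
  obtain ⟨P, hP, hmin⟩ := hG.exists_det_eq_one_min_fin_two
  obtain ⟨S, hS, hred⟩ :=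
    (hG.transpose_mul_mul_of_det_eq_one hP).exists_reduced_of_min_fin_two hmin
  refine ⟨P * S, by rw [det_mul, hP, hS, one_mul], ?_⟩
  simpa only [transpose_mul, Matrix.mul_assoc] using hred

lemma IsHermitian.det_fin_two {G : Matrix (Fin 2) (Fin 2) ℤ} (hG : G.IsHermitian) :
    G.det = G 0 0 * G 1 1 - G 0 1 ^ 2 := by
  have : G 1 0 = G 0 1 := by simpa using hG.apply 0 1
  rw [Matrix.det_fin_two, this, sq]

lemma IsHermitian.three_mul_sq_le_det_fin_two {G : Matrix (Fin 2) (Fin 2) ℤ} (hG : G.IsHermitian)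
    (h01 : 2 * |G 0 1| ≤ G 0 0) (h11 : G 0 0 ≤ G 1 1) : 3 * G 0 0 ^ 2 ≤ 4 * G.det := by
  rw [hG.det_fin_two, ← sq_abs (G 0 1)]
  nlinarith [abs_nonneg (G 0 1)]

lemma PosDef.exists_three_mul_sq_le_det_fin_two {G : Matrix (Fin 2) (Fin 2) ℤ} (hG : G.PosDef) :
    ∃ v ≠ 0, 3 * (v ⬝ᵥ G *ᵥ v) ^ 2 ≤ 4 * G.det := by
  obtain ⟨P, hP, h01, h11⟩ := hG.exists_reduced_fin_two
  refine ⟨P.col 0, col_ne_zero_of_det_eq_one hP 0, ?_⟩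
  rw [← transpose_mul_mul_apply_self, ← det_transpose_mul_mul_of_det_eq_one G hP]
  exact (hG.transpose_mul_mul_of_det_eq_one hP).1.three_mul_sq_le_det_fin_two h01 h11

lemma PosDef.exists_eq_transpose_mul_self_fin_two {G : Matrix (Fin 2) (Fin 2) ℤ} (hG : G.PosDef)
    (hdet : G.det = 1) : ∃ L : Matrix (Fin 2) (Fin 2) ℤ, G = Lᵀ * L := by
  obtain ⟨P, hP, h01, h11⟩ := hG.exists_reduced_fin_two
  have hG' := hG.transpose_mul_mul_of_det_eq_one hP
  have hdet' := (det_transpose_mul_mul_of_det_eq_one G hP).trans hdet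
  have h00 : (Pᵀ * G * P) 0 0 = 1 := by
    have := hG'.1.three_mul_sq_le_det_fin_two h01 h11
    nlinarith [hG'.diag_pos (i := 0)]
  have hB : (Pᵀ * G * P) 0 1 = 0 := by
    rw [h00] at h01; exact abs_eq_zero.1 (by linarith [abs_nonneg ((Pᵀ * G * P) 0 1)])
  have hC : (Pᵀ * G * P) 1 1 = 1 := by
    rw [hG'.1.det_fin_two, h00, hB] at hdet'; linarith
  have hB' : (Pᵀ * G * P) 1 0 = 0 := by simpa [hB] using hG'.1.apply 0 1
  refine ⟨adjugate P, (eq_transpose_mul_self_of_transpose_mul_mul (L := 1) hP ?_).trans (by simp)⟩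
  ext i j; fin_cases i <;> fin_cases j <;> simp [h00, hB, hB', hC]

lemma exists_det_eq_one_col_zero_fin_three {v c : Fin 3 → ℤ} (hc : c ⬝ᵥ v = 1) :
    ∃ P : Matrix (Fin 3) (Fin 3) ℤ, P.det = 1 ∧ P.col 0 = v := by
  obtain ⟨g, x₁, y₁, hx, hy, a, b, hab⟩ := Int.exists_eq_mul_isCoprime (v 0) (v 1)
  refine ⟨!![v 0, -b, -c 2 * x₁; v 1, a, -c 2 * y₁; v 2, 0, c 0 * x₁ + c 1 * y₁], ?_, ?_⟩
  · simp [det_fin_three, dotProduct, Fin.sum_univ_three] at hc ⊢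
    rw [hx, hy] at hc ⊢
    linear_combination (c 0 * x₁ * g + c 1 * y₁ * g + c 2 * v 2) * hab + hc
  · ext i; fin_cases i <;> rfl

lemma PosDef.exists_det_eq_one_min_fin_three {G : Matrix (Fin 3) (Fin 3) ℤ} (hG : G.PosDef) :
    ∃ P : Matrix (Fin 3) (Fin 3) ℤ, P.det = 1 ∧
      ∀ w ≠ 0, (Pᵀ * G * P) 0 0 ≤ w ⬝ᵥ (Pᵀ * G * P) *ᵥ w := by
  obtain ⟨v, hv, hmin⟩ := hG.exists_min_dotProduct_mulVec
  obtain ⟨c, hc⟩ := hG.exists_dotProduct_eq_one_of_min hv hmin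
  obtain ⟨P, hP, hcol⟩ := exists_det_eq_one_col_zero_fin_three hc
  exact ⟨P, hP, transpose_mul_mul_apply_self_le_of_min hmin hP hcol⟩

/-- `G 0 0` times the Schur complement of the entry `G 0 0` in a symmetric `3 × 3` matrix. -/
def scaledSchur (G : Matrix (Fin 3) (Fin 3) ℤ) : Matrix (Fin 2) (Fin 2) ℤ :=
  !![G 0 0 * G 1 1 - G 0 1 ^ 2, G 0 0 * G 1 2 - G 0 1 * G 0 2;
     G 0 0 * G 1 2 - G 0 1 * G 0 2, G 0 0 * G 2 2 - G 0 2 ^ 2]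

lemma scaledSchur_isHermitian (G : Matrix (Fin 3) (Fin 3) ℤ) : (scaledSchur G).IsHermitian := by
  ext i j; fin_cases i <;> fin_cases j <;> rfl

section
variable {G : Matrix (Fin 3) (Fin 3) ℤ} (hG : G.IsHermitian)
include hG

lemma IsHermitian.apply_fin_three : G 1 0 = G 0 1 ∧ G 2 0 = G 0 2 ∧ G 2 1 = G 1 2 :=
  ⟨by simpa using hG.apply 0 1, by simpa using hG.apply 0 2, by simpa using hG.apply 1 2⟩

lemma IsHermitian.det_scaledSchur : (scaledSchur G).det = G 0 0 * G.det := by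
  obtain ⟨h10, h20, h21⟩ := hG.apply_fin_three
  simp [scaledSchur, det_fin_three, h10, h20, h21]; ring

lemma IsHermitian.mul_dotProduct_mulVec_eq_sq_add_scaledSchur (x : ℤ) (u : Fin 2 → ℤ) :
    G 0 0 * (vecCons x u ⬝ᵥ G *ᵥ vecCons x u)
      = (G 0 0 * x + G 0 1 * u 0 + G 0 2 * u 1) ^ 2 + u ⬝ᵥ scaledSchur G *ᵥ u := by
  obtain ⟨h10, h20, h21⟩ := hG.apply_fin_three
  simp [scaledSchur, dotProduct, mulVec, Fin.sum_univ_three, Fin.sum_univ_two, h10, h20, h21]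
  ring

end

lemma PosDef.three_mul_sq_le_scaledSchur {G : Matrix (Fin 3) (Fin 3) ℤ} (hG : G.PosDef)
    (hmin : ∀ w ≠ 0, G 0 0 ≤ w ⬝ᵥ G *ᵥ w) {u : Fin 2 → ℤ} (hu : u ≠ 0) :
    3 * G 0 0 ^ 2 ≤ 4 * (u ⬝ᵥ scaledSchur G *ᵥ u) := by
  have hM : 0 < G 0 0 := hG.diag_pos
  obtain ⟨k, hk⟩ := exists_two_mul_abs_add_mul_le (G 0 1 * u 0 + G 0 2 * u 1) hM
  have hw : vecCons k u ≠ 0 := by simp [cons_eq_zero_iff, hu]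
  have hid := hG.1.mul_dotProduct_mulVec_eq_sq_add_scaledSchur k u
  have hsq : 4 * (G 0 0 * k + G 0 1 * u 0 + G 0 2 * u 1) ^ 2 ≤ G 0 0 ^ 2 := by
    rw [← sq_abs, show G 0 0 * k + G 0 1 * u 0 + G 0 2 * u 1
      = G 0 1 * u 0 + G 0 2 * u 1 + k * G 0 0 by ring]
    nlinarith [abs_nonneg (G 0 1 * u 0 + G 0 2 * u 1 + k * G 0 0)]
  nlinarith [mul_le_mul_of_nonneg_left (hmin _ hw) hM.le]

section
variable {G : Matrix (Fin 3) (Fin 3) ℤ} (hG : G.PosDef) (hmin : ∀ w ≠ 0, G 0 0 ≤ w ⬝ᵥ G *ᵥ w)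
include hG hmin

lemma PosDef.scaledSchur_posDef : (scaledSchur G).PosDef := by
  refine .of_dotProduct_mulVec_pos (scaledSchur_isHermitian G) fun u hu => ?_
  have := hG.three_mul_sq_le_scaledSchur hmin hu
  have : 0 < G 0 0 := hG.diag_pos
  rw [star_trivial]; nlinarith

lemma PosDef.twenty_seven_mul_pow_three_le_det : 27 * G 0 0 ^ 3 ≤ 64 * G.det := by
  have hM : 0 < G 0 0 := hG.diag_pos
  obtain ⟨u, hu, hbound⟩ := (hG.scaledSchur_posDef hmin).exists_three_mul_sq_le_det_fin_two
  rw [hG.1.det_scaledSchur] at hbound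
  have hlow := hG.three_mul_sq_le_scaledSchur hmin hu
  have : 27 * G 0 0 ^ 4 ≤ 64 * G 0 0 * G.det := by nlinarith
  nlinarith

end

lemma IsHermitian.eq_transpose_mul_self_of_scaledSchur {G : Matrix (Fin 3) (Fin 3) ℤ}
    (hG : G.IsHermitian) (h00 : G 0 0 = 1) {K : Matrix (Fin 2) (Fin 2) ℤ}
    (hK : scaledSchur G = Kᵀ * K) :
    G = (!![1, G 0 1, G 0 2; 0, K 0 0, K 0 1; 0, K 1 0, K 1 1])ᵀ
      * !![1, G 0 1, G 0 2; 0, K 0 0, K 0 1; 0, K 1 0, K 1 1] := by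
  obtain ⟨h10, h20, h21⟩ := hG.apply_fin_three
  have hK' := fun i j => congrFun (congrFun hK i) j
  simp [scaledSchur, Matrix.mul_apply, Fin.sum_univ_two, h00] at hK'
  ext i j; fin_cases i <;> fin_cases j <;>
    simp [Matrix.mul_apply, Fin.sum_univ_three, h00, h10, h20, h21] <;> grind

lemma PosDef.exists_eq_transpose_mul_self_fin_three {G : Matrix (Fin 3) (Fin 3) ℤ}
    (hG : G.PosDef) (hdet : G.det = 1) : ∃ L : Matrix (Fin 3) (Fin 3) ℤ, G = Lᵀ * L := by
  obtain ⟨P, hP, hmin⟩ := hG.exists_det_eq_one_min_fin_three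
  have hG' := hG.transpose_mul_mul_of_det_eq_one hP
  have hdet' := (det_transpose_mul_mul_of_det_eq_one G hP).trans hdet
  have h00 : (Pᵀ * G * P) 0 0 = 1 := by
    have hM := hG'.diag_pos (i := 0)
    have hbound := hG'.twenty_seven_mul_pow_three_le_det hmin
    rw [hdet'] at hbound
    by_contra hne
    have : 2 ^ 3 ≤ (Pᵀ * G * P) 0 0 ^ 3 := pow_le_pow_left₀ (by norm_num) (by omega) 3
    linarith
  obtain ⟨K, hK⟩ := (hG'.scaledSchur_posDef hmin).exists_eq_transpose_mul_self_fin_two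
    (by rw [hG'.1.det_scaledSchur, h00, hdet', one_mul])
  exact ⟨_, eq_transpose_mul_self_of_transpose_mul_mul hP
    (hG'.1.eq_transpose_mul_self_of_scaledSchur h00 hK)⟩

end Matrix

lemma Nat.exists_prime_mod_eight_eq_three_dvd_add_one {m : ℕ} (hm : Odd m) :
    ∃ p : ℕ, p.Prime ∧ p % 8 = 3 ∧ m ∣ p + 1 := by
  have hcop : Nat.Coprime 8 m := Nat.Coprime.pow_left 3 (Nat.coprime_two_left.2 hm)
  have : NeZero (8 * m) := ⟨by have := hm.pos; positivity⟩
  let e := ZMod.chineseRemainder hcop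
  have hunit : IsUnit (e.symm (3, -1)) :=
    (Prod.isUnit_iff.2 ⟨(by decide : IsUnit (3 : ZMod 8)), isUnit_one.neg⟩).map e.symm
  obtain ⟨p, -, hp, hpa⟩ := Nat.forall_exists_prime_gt_and_eq_mod hunit 0
  have he : ((p : ZMod 8), (p : ZMod m)) = (3, -1) := by
    rw [← e.apply_symm_apply (3, -1), ← hpa, map_natCast]; rfl
  simp only [Prod.mk.injEq] at he
  refine ⟨p, hp, ?_, ?_⟩
  · have := congrArg ZMod.val he.1
    rwa [ZMod.val_natCast] at this
  · rw [← ZMod.natCast_eq_zero_iff]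
    push_cast; rw [he.2, neg_add_cancel]

lemma jacobiSym_neg_two_mul_eq_one {m p : ℕ} (hm : Odd m) (hp8 : p % 8 = 3) (hdvd : m ∣ p + 1) :
    jacobiSym (-(2 * m)) p = 1 := by
  have hp : Odd p := Nat.odd_iff.2 (by omega)
  have hpm : jacobiSym p m = jacobiSym (-1) m := by
    refine jacobiSym.mod_left' (Int.modEq_iff_dvd.2 ?_)
    rw [show (-1 : ℤ) - p = -((p + 1 : ℕ) : ℤ) by push_cast; ring, dvd_neg]
    exact Int.natCast_dvd_natCast.2 hdvd
  -- `J(-2 | p) = 1` as `p ≡ 3 (mod 8)`, and reciprocity turns `J(m | p)` into `±J(-1 | m) = 1`.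
  rw [neg_mul_eq_neg_mul, jacobiSym.mul_left, jacobiSym.at_neg_two hp,
    ZMod.χ₈'_nat_eq_if_mod_eight, if_neg (by omega), if_pos (by omega), one_mul,
    ← jacobiSym.quadratic_reciprocity_if (Nat.odd_iff.1 hm) (Nat.odd_iff.1 hp), hpm,
    jacobiSym.at_neg_one hm, ZMod.χ₄_nat_eq_if_mod_four]
  have := Nat.odd_iff.1 hm
  split_ifs <;> first | rfl | omega

lemma posDef_of_mul_sub_sq_eq_add_one {n p b γ : ℤ} (hn : 0 < n) (hp : 0 < p)
    (h : n * (p * γ - b ^ 2) = p + 1) : (!![n, 0, 1; 0, p, b; 1, b, γ]).PosDef := by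
  refine .of_dotProduct_mulVec_pos (by ext i j; fin_cases i <;> fin_cases j <;> rfl) fun v hv => ?_
  have hquad : n * p * (v ⬝ᵥ !![n, 0, 1; 0, p, b; 1, b, γ] *ᵥ v)
      = p * (n * v 0 + v 2) ^ 2 + n * (p * v 1 + b * v 2) ^ 2 + v 2 ^ 2 := by
    simp [dotProduct, mulVec, Fin.sum_univ_three]
    linear_combination v 2 ^ 2 * h
  rw [star_trivial]
  by_contra hle
  have hnp : 0 < n * p := mul_pos hn hp
  have hz : v 2 = 0 := by
    nlinarith [sq_nonneg (n * v 0 + v 2), sq_nonneg (p * v 1 + b * v 2), sq_nonneg (v 2)]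
  rw [hz] at hquad
  have hy : p * v 1 = 0 := by nlinarith [sq_nonneg (n * v 0), sq_nonneg (p * v 1)]
  have hx : n * v 0 = 0 := by nlinarith [sq_nonneg (n * v 0), sq_nonneg (p * v 1)]
  refine hv (funext fun i => ?_)
  fin_cases i
  exacts [(mul_eq_zero.1 hx).resolve_left hn.ne', (mul_eq_zero.1 hy).resolve_left hp.ne', hz]

lemma exists_sq_add_sq_add_sq_of_dvd {n p r : ℤ} (hn : 0 < n) (hp : 0 < p) (hdvd : n ∣ p + 1)
    (hr : p ∣ r ^ 2 + n) : ∃ x y z : ℤ, n = x ^ 2 + y ^ 2 + z ^ 2 := by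
  obtain ⟨D, hD⟩ := hdvd
  obtain ⟨γ, hγ⟩ : p ∣ (r * D) ^ 2 + D := by
    have : (r * D) ^ 2 + D = D ^ 2 * (r ^ 2 + n) - D * p := by linear_combination D * hD
    rw [this]; exact dvd_sub (dvd_mul_of_dvd_right hr _) (dvd_mul_left p D)
  have h : n * (p * γ - (r * D) ^ 2) = p + 1 := by linear_combination -n * hγ - hD
  have hdet : (!![n, 0, 1; 0, p, r * D; 1, r * D, γ]).det = 1 := by
    simp [det_fin_three]; linear_combination h
  obtain ⟨L, hL⟩ :=
    (posDef_of_mul_sub_sq_eq_add_one hn hp h).exists_eq_transpose_mul_self_fin_three hdet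
  refine ⟨L 0 0, L 1 0, L 2 0, ?_⟩
  have := congrFun (congrFun hL 0) 0
  simp [Matrix.mul_apply, Fin.sum_univ_three] at this
  linear_combination this

lemma exists_sq_add_sq_add_sq_two_mul_odd {m : ℕ} (hm : Odd m) :
    ∃ x y z : ℤ, 2 * m = x ^ 2 + y ^ 2 + z ^ 2 := by
  obtain ⟨p, hp, hp8, hdvd⟩ := Nat.exists_prime_mod_eight_eq_three_dvd_add_one hm
  have : Fact p.Prime := ⟨hp⟩
  obtain ⟨s, hs⟩ := ZMod.isSquare_of_jacobiSym_eq_one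
    (by exact_mod_cast jacobiSym_neg_two_mul_eq_one hm hp8 hdvd)
  refine exists_sq_add_sq_add_sq_of_dvd (n := 2 * m) (p := p) (r := s.val)
    (by have := hm.pos; positivity) (by exact_mod_cast hp.pos) ?_ ?_
  · have h2m : 2 * m ∣ p + 1 :=
      Nat.Coprime.mul_dvd_of_dvd_of_dvd (Nat.coprime_two_left.2 hm) (by omega) hdvd
    exact_mod_cast Int.natCast_dvd_natCast.2 h2m
  · rw [← ZMod.intCast_zmod_eq_zero_iff_dvd]
    push_cast at hs ⊢
    rw [ZMod.natCast_zmod_val, sq, ← hs, neg_add_cancel]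

lemma two_mul_T (x : ℕ) : 2 * T x = x * (x + 1) :=
  Nat.mul_div_cancel' (Nat.even_mul_succ_self x).two_dvd

lemma exists_sq_eq_eight_mul_T_add_one {a : ℤ} (ha : Odd a) : ∃ x : ℕ, a ^ 2 = 8 * T x + 1 := by
  obtain ⟨x, hx⟩ := Int.natAbs_odd.2 ha
  refine ⟨x, ?_⟩
  have hT : (2 * T x : ℤ) = x * (x + 1) := by exact_mod_cast two_mul_T x
  rw [← Int.natAbs_sq, hx]
  push_cast
  linear_combination -4 * hT

lemma exists_odd_odd_even_of_sq_add_sq_add_sq {n u v w : ℤ}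
    (h : u ^ 2 + v ^ 2 + w ^ 2 = 4 * n + 2) :
    ∃ a b c : ℤ, Odd a ∧ Odd b ∧ Even c ∧ a ^ 2 + b ^ 2 + c ^ 2 = 4 * n + 2 := by
  have hsq (t : ℤ) : Even t ∧ t ^ 2 % 4 = 0 ∨ Odd t ∧ t ^ 2 % 4 = 1 :=
    (Int.even_or_odd t).imp
      (fun h => ⟨h, Int.emod_eq_zero_of_dvd (by simpa using pow_dvd_pow_of_dvd h.two_dvd 2)⟩)
      (fun h => ⟨h, Int.sq_mod_four_eq_one_of_odd h⟩)
  rcases hsq u with ⟨hu, hu4⟩ | ⟨hu, hu4⟩ <;> rcases hsq v with ⟨hv, hv4⟩ | ⟨hv, hv4⟩ <;>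
    rcases hsq w with ⟨hw, hw4⟩ | ⟨hw, hw4⟩ <;>
    first
    | omega
    | exact ⟨u, v, w, hu, hv, hw, h⟩
    | exact ⟨u, w, v, hu, hw, hv, by linarith⟩
    | exact ⟨v, w, u, hv, hw, hu, by linarith⟩

theorem liouville_1_1_2 (n : ℕ) : ∃ x y z : ℕ, n = T x + T y + 2 * T z := by
  obtain ⟨u, v, w, huvw⟩ := exists_sq_add_sq_add_sq_two_mul_odd (odd_two_mul_add_one n)
  have h42 : u ^ 2 + v ^ 2 + w ^ 2 = 4 * (n : ℤ) + 2 := by push_cast at huvw; linarith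
  obtain ⟨a, b, c, ha, hb, hc, habc⟩ := exists_odd_odd_even_of_sq_add_sq_add_sq h42
  obtain ⟨x, hx⟩ := exists_sq_eq_eight_mul_T_add_one (ha.add_even hc)
  obtain ⟨y, hy⟩ := exists_sq_eq_eight_mul_T_add_one (ha.sub_even hc)
  obtain ⟨z, hz⟩ := exists_sq_eq_eight_mul_T_add_one hb
  refine ⟨x, y, z, ?_⟩
  have : (8 * n : ℤ) = 8 * (T x + T y + 2 * T z) := by
    linear_combination -2 * habc + hx + hy + 2 * hz
  omega
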